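/- arXiv:2111.00949 — 3 statements merged into one kernel-verified Lean document; each statement's English description precedes it below -/
import Mathlib

section
/- Let f : ℝ → ℝ be twice continuously differentiable with bounded first and second derivatives, and define g : ℝ^r → ℝ by g(s) = f(∑_{j=1}^r s_j²)/4. Let Σ_S = (σ_{jk}) be the covariance matrix of the random vector S = (S_1, …, S_r)ᵀ. Then ∑_{j,k=1}^r σ_{jk} E[∂²g/∂s_j∂s_k (S)] − E[∑_{j=1}^r S_j · ∂g/∂s_j (S)] = E[F_r f''(F_r) + (1/2)(r − 1 − F_r) f'(F_r)]. -/
open MeasureTheory Finset Real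

noncomputable section

instance instMSPerm (r : ℕ) : MeasurableSpace (Equiv.Perm (Fin r)) := ⊤

/-- The joint law of `n` independent uniformly random permutations of `{1, …, r}`:
the uniform probability measure on the finite product space. -/
def friedmanMeasure (n r : ℕ) : Measure (Fin n → Equiv.Perm (Fin r)) :=
  (PMF.uniformOfFintype (Fin n → Equiv.Perm (Fin r))).toMeasure

/-- `ρ_i(j) = π_i(j) - (r+1)/2`, where `π_i(j) ∈ {1, …, r}` is the rank assigned by the
`i`-th permutation to treatment `j` (a permutation of `Fin r` assigns values in `{0, …, r-1}`,
hence the `+ 1`). -/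
def rho (n r : ℕ) (i : Fin n) (j : Fin r) (ω : Fin n → Equiv.Perm (Fin r)) : ℝ :=
  ((ω i j : ℕ) : ℝ) + 1 - ((r : ℝ) + 1) / 2

/-- `S_j = (√12/√(r(r+1)n)) ∑_{i=1}^n ρ_i(j)`. -/
def Sstat (n r : ℕ) (j : Fin r) (ω : Fin n → Equiv.Perm (Fin r)) : ℝ :=
  Real.sqrt 12 / Real.sqrt ((r : ℝ) * ((r : ℝ) + 1) * (n : ℝ)) * ∑ i, rho n r i j ω

/-- Friedman's statistic `F_r = ∑_{j=1}^r S_j²`. -/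
def friedman (n r : ℕ) (ω : Fin n → Equiv.Perm (Fin r)) : ℝ :=
  ∑ j, (Sstat n r j ω) ^ 2

/-- The chi-square distribution with `p` degrees of freedom: the Gamma distribution
with shape `p/2` and rate `1/2`. -/
def chiSq (p : ℕ) : Measure ℝ := ProbabilityTheory.gammaMeasure ((p : ℝ) / 2) (1 / 2)

end

noncomputable section

/-- The partial derivative `∂g/∂s_j` of a function `g : ℝ^ι → ℝ` at the point `s`. -/
def pd {ι : Type*} [DecidableEq ι] (j : ι) (g : (ι → ℝ) → ℝ) (s : ι → ℝ) : ℝ :=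
  deriv (fun t => g (Function.update s j t)) (s j)

/-- The covariance `σ_{jk} = Cov(S_j, S_k)` of the random vector `S = (S_1, …, S_r)ᵀ`. -/
def covS (n r : ℕ) (j k : Fin r) : ℝ :=
  (∫ ω, Sstat n r j ω * Sstat n r k ω ∂(friedmanMeasure n r)) -
    (∫ ω, Sstat n r j ω ∂(friedmanMeasure n r)) *
      (∫ ω, Sstat n r k ω ∂(friedmanMeasure n r))


/-!
Differentiating `g(s) = f(|s|²)/4` gives `∂_k g(s) = s_k f'(|s|²)/2` and
`∂_j ∂_k g(s) = δ_{jk} f'(|s|²)/2 + s_j s_k f''(|s|²)`. Every row of ranks is a permutation of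
`1, …, r`, so `∑_j S_j = 0`. Rows are independent with centred entries, so only the diagonal
terms `i = i'` survive in `E[S_j S_k]`, and within one uniform permutation the treatments are
exchangeable; together with the vanishing row sum this gives `Σ_S = I − J/r`. Contracting the
Hessian with this projection yields
`(r − 1) f'/2 + (|S|² − (∑_j S_j)²/r) f'' = (r − 1) f'/2 + F_r f''`.
-/

open Equiv
open scoped Nat

section UniformCoordinates

variable {ι β : Type*} [Fintype ι] [DecidableEq ι] [Fintype β]

theorem sum_pi_eq_sum_sum_funSplitAt (F : (ι → β) → ℝ) (i : ι) :
    ∑ ω, F ω = ∑ b, ∑ ρ : {j // j ≠ i} → β, F ((funSplitAt i β).symm (b, ρ)) := by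
  rw [← (funSplitAt i β).symm.sum_comp, Fintype.sum_prod_type]

theorem card_mul_sum_pi_apply (g : β → ℝ) (i : ι) :
    Fintype.card β * ∑ ω : ι → β, g (ω i) = Fintype.card (ι → β) * ∑ b, g b := by
  rw [sum_pi_eq_sum_sum_funSplitAt _ i, Fintype.card_congr (funSplitAt i β), Fintype.card_prod]
  simp [Finset.mul_sum, -Fintype.card_pi, mul_assoc]

theorem sum_pi_apply_mul_apply_eq_zero {g : β → ℝ} (hg : ∑ b, g b = 0) (h : β → ℝ) {i i' : ι}
    (hi : i' ≠ i) : ∑ ω : ι → β, g (ω i) * h (ω i') = 0 := by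
  rw [sum_pi_eq_sum_sum_funSplitAt _ i]
  simp [hi, ← Finset.mul_sum, ← Finset.sum_mul, hg]

theorem sum_pi_apply_eq_zero {g : β → ℝ} (hg : ∑ b, g b = 0) (i : ι) :
    ∑ ω : ι → β, g (ω i) = 0 := by
  rw [sum_pi_eq_sum_sum_funSplitAt _ i]
  simp [← Finset.mul_sum, hg]

end UniformCoordinates

section UniformPermutation

variable {α : Type*} [Fintype α] [DecidableEq α]

theorem sum_perm_apply_eq (a : α → ℝ) (j k : α) :
    ∑ p : Perm α, a (p k) = ∑ p : Perm α, a (p j) := by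
  rw [← Equiv.sum_comp (Equiv.mulRight (swap j k))]
  simp

theorem card_mul_sum_perm_apply (a : α → ℝ) (j : α) :
    Fintype.card α * ∑ p : Perm α, a (p j) = Fintype.card (Perm α) * ∑ v, a v := calc
  _ = ∑ k : α, ∑ p : Perm α, a (p k) := by simp [sum_perm_apply_eq a j]
  _ = ∑ p : Perm α, ∑ v, a v := by rw [Finset.sum_comm]; simp only [Equiv.sum_comp]
  _ = _ := by simp

theorem sum_perm_apply_eq_zero {a : α → ℝ} (ha : ∑ v, a v = 0) (j : α) :
    ∑ p : Perm α, a (p j) = 0 := by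
  have : Nonempty α := ⟨j⟩
  have h := card_mul_sum_perm_apply a j
  rw [ha, mul_zero] at h
  exact (mul_eq_zero.1 h).resolve_left (Nat.cast_ne_zero.2 Fintype.card_ne_zero)

theorem sum_perm_apply_mul_apply_eq (a : α → ℝ) {j k k' : α} (hk : k ≠ j) (hk' : k' ≠ j) :
    ∑ p : Perm α, a (p j) * a (p k') = ∑ p : Perm α, a (p j) * a (p k) := by
  rw [← Equiv.sum_comp (Equiv.mulRight (swap k k'))]
  simp [swap_apply_of_ne_of_ne hk.symm hk'.symm]

theorem card_sub_one_mul_sum_perm_apply_mul_apply {a : α → ℝ} (ha : ∑ v, a v = 0) {j k : α}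
    (hk : k ≠ j) :
    (Fintype.card α - 1) * ∑ p : Perm α, a (p j) * a (p k) = -∑ p : Perm α, a (p j) ^ 2 := calc
  _ = ∑ k' ∈ Finset.univ.erase j, ∑ p : Perm α, a (p j) * a (p k') := by
    rw [Finset.sum_congr rfl fun k' hk' =>
      sum_perm_apply_mul_apply_eq a hk (Finset.ne_of_mem_erase hk')]
    simp [Finset.card_erase_of_mem, Nat.cast_sub (Fintype.card_pos_iff.2 ⟨j⟩)]
  _ = ∑ p : Perm α, a (p j) * (∑ v, a v - a (p j)) := by
    rw [Finset.sum_comm]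
    refine Finset.sum_congr rfl fun p _ => ?_
    rw [← Finset.mul_sum, Finset.sum_erase_eq_sub (Finset.mem_univ j), Equiv.sum_comp p a]
  _ = _ := by simp [ha, sq]

end UniformPermutation

section CentredRanks

theorem sum_range_add (m : ℕ) (c : ℝ) :
    ∑ i ∈ Finset.range m, ((i : ℝ) + c) = m * (m - 1) / 2 + m * c := by
  induction m with
  | zero => simp
  | succ m ih => rw [Finset.sum_range_succ, ih]; push_cast; ring

theorem sum_range_add_sq (m : ℕ) (c : ℝ) :
    ∑ i ∈ Finset.range m, ((i : ℝ) + c) ^ 2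
      = m * (m - 1) * (2 * m - 1) / 6 + c * m * (m - 1) + m * c ^ 2 := by
  induction m with
  | zero => simp
  | succ m ih => rw [Finset.sum_range_succ, ih]; push_cast; ring

def centredRank (r : ℕ) (v : Fin r) : ℝ := ((v : ℕ) : ℝ) + 1 - ((r : ℝ) + 1) / 2

theorem rho_eq_centredRank (n r : ℕ) (i : Fin n) (j : Fin r) (ω : Fin n → Perm (Fin r)) :
    rho n r i j ω = centredRank r (ω i j) := rfl

theorem sum_centredRank (r : ℕ) : ∑ v, centredRank r v = 0 := by
  simp only [centredRank, add_sub_assoc,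
    Fin.sum_univ_eq_sum_range (fun i : ℕ => (i : ℝ) + (1 - ((r : ℝ) + 1) / 2)), sum_range_add]
  ring

theorem sum_centredRank_sq (r : ℕ) : ∑ v, centredRank r v ^ 2 = r * ((r : ℝ) ^ 2 - 1) / 12 := by
  simp only [centredRank, add_sub_assoc,
    Fin.sum_univ_eq_sum_range (fun i : ℕ => ((i : ℝ) + (1 - ((r : ℝ) + 1) / 2)) ^ 2),
    sum_range_add_sq]
  ring

theorem sum_perm_centredRank_mul_centredRank {r : ℕ} (j k : Fin r) :
    ∑ p : Perm (Fin r), centredRank r (p j) * centredRank r (p k)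
      = r ! * ((r : ℝ) + 1) / 12 * ((if j = k then (r : ℝ) else 0) - 1) := by
  have hr : (r : ℝ) ≠ 0 := Nat.cast_ne_zero.2 (Fin.pos j).ne'
  have hsq : ∑ p : Perm (Fin r), centredRank r (p j) ^ 2 = r ! * ((r : ℝ) ^ 2 - 1) / 12 := by
    have h := card_mul_sum_perm_apply (fun v => centredRank r v ^ 2) j
    simp only [Fintype.card_fin, Fintype.card_perm, sum_centredRank_sq] at h
    exact mul_left_cancel₀ hr (by linear_combination h)
  by_cases hjk : j = k
  · subst hjk
    simp only [← sq, hsq, if_true]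
    ring
  · have h := card_sub_one_mul_sum_perm_apply_mul_apply (sum_centredRank r) (Ne.symm hjk)
    have hr1 : (r : ℝ) - 1 ≠ 0 := by
      have : 1 < r := by have := Fin.val_ne_of_ne hjk; omega
      rw [sub_ne_zero]; exact_mod_cast this.ne'
    rw [Fintype.card_fin, hsq] at h
    rw [if_neg hjk]
    exact mul_left_cancel₀ hr1 (by linear_combination h)

end CentredRanks

section FriedmanCovariance

instance (n r : ℕ) : IsProbabilityMeasure (friedmanMeasure n r) :=
  PMF.toMeasure.isProbabilityMeasure _

theorem integral_friedmanMeasure {n r : ℕ} (g : (Fin n → Perm (Fin r)) → ℝ) :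
    ∫ ω, g ω ∂friedmanMeasure n r = (Fintype.card (Fin n → Perm (Fin r)) : ℝ)⁻¹ * ∑ ω, g ω := by
  simp [friedmanMeasure, PMF.integral_eq_sum, PMF.uniformOfFintype_apply, Finset.mul_sum]

variable {n r : ℕ}

theorem sum_Sstat (ω : Fin n → Perm (Fin r)) : ∑ j, Sstat n r j ω = 0 := by
  simp only [Sstat, rho_eq_centredRank, ← Finset.mul_sum]
  rw [Finset.sum_comm]
  simp [Equiv.sum_comp, sum_centredRank]

theorem sum_omega_Sstat (j : Fin r) : ∑ ω, Sstat n r j ω = 0 := by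
  simp only [Sstat, rho_eq_centredRank, ← Finset.mul_sum]
  rw [Finset.sum_comm, Finset.sum_eq_zero fun i _ =>
    sum_pi_apply_eq_zero (sum_perm_apply_eq_zero (sum_centredRank r) j) i, mul_zero]

theorem Sstat_mul_Sstat (j k : Fin r) (ω : Fin n → Perm (Fin r)) :
    Sstat n r j ω * Sstat n r k ω = 12 / (r * (r + 1) * n)
      * ∑ i, ∑ i', centredRank r (ω i j) * centredRank r (ω i' k) := by
  rw [Sstat, Sstat, mul_mul_mul_comm, ← sq, div_pow, sq_sqrt (by norm_num),
    sq_sqrt (by positivity), Finset.sum_mul_sum]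
  rfl

theorem sum_omega_centredRank_mul_centredRank (i : Fin n) (j k : Fin r) :
    ∑ ω : Fin n → Perm (Fin r), centredRank r (ω i j) * centredRank r (ω i k)
      = Fintype.card (Fin n → Perm (Fin r))
          * ((r + 1) / 12 * ((if j = k then (r : ℝ) else 0) - 1)) := by
  have h := card_mul_sum_pi_apply
    (fun p : Perm (Fin r) => centredRank r (p j) * centredRank r (p k)) i
  rw [sum_perm_centredRank_mul_centredRank, Fintype.card_perm, Fintype.card_fin] at h
  exact mul_left_cancel₀ (Nat.cast_ne_zero.2 r.factorial_ne_zero) (by linear_combination h)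

theorem sum_omega_Sstat_mul_Sstat (hn : n ≠ 0) (j k : Fin r) :
    ∑ ω, Sstat n r j ω * Sstat n r k ω
      = Fintype.card (Fin n → Perm (Fin r)) * ((if j = k then 1 else 0) - (r : ℝ)⁻¹) := by
  have hr : (r : ℝ) ≠ 0 := Nat.cast_ne_zero.2 (Fin.pos j).ne'
  have hn' : (n : ℝ) ≠ 0 := Nat.cast_ne_zero.2 hn
  have hindep : ∀ i i', i' ≠ i →
      ∑ ω : Fin n → Perm (Fin r), centredRank r (ω i j) * centredRank r (ω i' k) = 0 :=
    fun i i' h => sum_pi_apply_mul_apply_eq_zero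
      (sum_perm_apply_eq_zero (sum_centredRank r) j) (fun p => centredRank r (p k)) h
  calc ∑ ω, Sstat n r j ω * Sstat n r k ω
      = 12 / (r * (r + 1) * n) * ∑ i, ∑ i', ∑ ω : Fin n → Perm (Fin r),
          centredRank r (ω i j) * centredRank r (ω i' k) := by
        simp only [Sstat_mul_Sstat j k]
        rw [← Finset.mul_sum, Finset.sum_comm]
        exact congrArg _ (Finset.sum_congr rfl fun i _ => Finset.sum_comm)
    _ = 12 / (r * (r + 1) * n) * ∑ i : Fin n, ∑ ω : Fin n → Perm (Fin r),
          centredRank r (ω i j) * centredRank r (ω i k) := by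
        congr 1
        exact Finset.sum_congr rfl fun i _ =>
          Finset.sum_eq_single i (fun i' _ h => hindep i i' h) (by simp)
    _ = _ := by
        simp only [sum_omega_centredRank_mul_centredRank, Finset.sum_const, Finset.card_univ,
          Fintype.card_fin, nsmul_eq_mul]
        split_ifs
        · field_simp
        · field_simp; ring

theorem covS_eq (hn : n ≠ 0) (j k : Fin r) :
    covS n r j k = (if j = k then 1 else 0) - (r : ℝ)⁻¹ := by
  have hN : (Fintype.card (Fin n → Perm (Fin r)) : ℝ) ≠ 0 :=
    Nat.cast_ne_zero.2 Fintype.card_ne_zero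
  simp only [covS, integral_friedmanMeasure, sum_omega_Sstat, sum_omega_Sstat_mul_Sstat hn,
    mul_zero, sub_zero, inv_mul_cancel_left₀ hN]

end FriedmanCovariance

theorem hasDerivAt_update_apply {ι : Type*} [DecidableEq ι] (s : ι → ℝ) (j k : ι) :
    HasDerivAt (fun t => Function.update s j t k) (if k = j then 1 else 0) (s j) := by
  simpa [Pi.single_apply] using hasDerivAt_pi.1 (hasDerivAt_update s j (s j)) k

section PartialDerivatives

variable {ι : Type*} [Fintype ι] [DecidableEq ι] {f f' f'' : ℝ → ℝ}

theorem hasDerivAt_sum_sq_update (s : ι → ℝ) (j : ι) :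
    HasDerivAt (fun t => ∑ l, Function.update s j t l ^ 2) (2 * s j) (s j) := by
  simpa using HasDerivAt.fun_sum (u := Finset.univ) fun l _ => (hasDerivAt_update_apply s j l).pow 2

theorem pd_sum_sq_comp (hf : ∀ x, HasDerivAt f (f' x) x) (k : ι) (s : ι → ℝ) :
    pd k (fun s' : ι → ℝ => f (∑ l, (s' l) ^ 2) / 4) s = s k * f' (∑ l, (s l) ^ 2) / 2 := by
  have h : HasDerivAt (fun t => f (∑ l, Function.update s k t l ^ 2) / 4)
      (f' (∑ l, Function.update s k (s k) l ^ 2) * (2 * s k) / 4) (s k) :=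
    ((hf _).comp (s k) (hasDerivAt_sum_sq_update s k)).div_const 4
  rw [pd, h.deriv, Function.update_eq_self]
  ring

theorem pd_pd_sum_sq_comp (hf : ∀ x, HasDerivAt f (f' x) x) (hf' : ∀ x, HasDerivAt f' (f'' x) x)
    (j k : ι) (s : ι → ℝ) :
    pd j (fun s'' => pd k (fun s' : ι → ℝ => f (∑ l, (s' l) ^ 2) / 4) s'') s
      = (if j = k then f' (∑ l, (s l) ^ 2) / 2 else 0) + s j * s k * f'' (∑ l, (s l) ^ 2) := by
  have h : HasDerivAt
      (fun t => Function.update s j t k * f' (∑ l, Function.update s j t l ^ 2) / 2)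
      (((if k = j then 1 else 0) * f' (∑ l, Function.update s j (s j) l ^ 2)
        + Function.update s j (s j) k * (f'' (∑ l, Function.update s j (s j) l ^ 2) * (2 * s j)))
          / 2) (s j) :=
    ((hasDerivAt_update_apply s j k).mul
      ((hf' _).comp (s j) (hasDerivAt_sum_sq_update s j))).div_const 2
  simp only [pd_sum_sq_comp hf]
  rw [pd, h.deriv, Function.update_eq_self]
  by_cases hjk : j = k
  · subst hjk
    simp only [if_true]
    ring
  · simp only [hjk, Ne.symm hjk, if_false]
    ring

end PartialDerivatives

theorem sum_sum_centering_mul_hessian {ι : Type*} [Fintype ι] [DecidableEq ι] [Nonempty ι]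
    {s : ι → ℝ} (hs : ∑ j, s j = 0) (a b : ℝ) :
    ∑ j, ∑ k, ((if j = k then 1 else 0) - (Fintype.card ι : ℝ)⁻¹)
        * ((if j = k then a else 0) + s j * s k * b)
      = (Fintype.card ι - 1) * a + (∑ j, s j ^ 2) * b := by
  simp [sub_mul, mul_add, Finset.sum_sub_distrib, Finset.sum_add_distrib, ite_mul,
    ← Finset.mul_sum, ← Finset.sum_mul, hs, sq]

theorem chiSq_mvn_stein_equation_connection_general (n r : ℕ) (hn : 1 ≤ n) (hr : 2 ≤ r)
    (f f' f'' : ℝ → ℝ)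
    (hf1 : ∀ x, HasDerivAt f (f' x) x)
    (hf2 : ∀ x, HasDerivAt f' (f'' x) x) :
    (∑ j, ∑ k, covS n r j k *
        ∫ ω, pd j (fun s => pd k (fun s' : Fin r → ℝ => f (∑ l, (s' l) ^ 2) / 4) s)
          (fun l => Sstat n r l ω) ∂(friedmanMeasure n r)) -
      (∫ ω, ∑ j, Sstat n r j ω *
          pd j (fun s' : Fin r → ℝ => f (∑ l, (s' l) ^ 2) / 4) (fun l => Sstat n r l ω)
          ∂(friedmanMeasure n r))
      = ∫ ω, (friedman n r ω * f'' (friedman n r ω)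
          + 1 / 2 * ((r : ℝ) - 1 - friedman n r ω) * f' (friedman n r ω))
          ∂(friedmanMeasure n r) := by
  have : Nonempty (Fin r) := ⟨⟨0, by omega⟩⟩
  simp only [pd_pd_sum_sq_comp hf1 hf2, covS_eq (Nat.one_le_iff_ne_zero.1 hn), ← integral_const_mul]
  simp only [pd_sum_sq_comp hf1, ← integral_finsetSum _ fun _ _ => Integrable.of_finite]
  rw [← integral_sub .of_finite .of_finite]
  refine integral_congr_ae (ae_of_all _ fun ω => ?_)
  simp only [← friedman.eq_1]
  set F := friedman n r ω
  have hF : F = ∑ j, Sstat n r j ω ^ 2 := rfl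
  have hHessian := sum_sum_centering_mul_hessian (sum_Sstat ω) (f' F / 2) (f'' F)
  have hGradient : ∑ j, Sstat n r j ω * (Sstat n r j ω * f' F / 2) = F * f' F / 2 := by
    rw [hF, Finset.sum_mul, Finset.sum_div]
    exact Finset.sum_congr rfl fun j _ => by ring
  rw [Fintype.card_fin, ← hF] at hHessian
  rw [hHessian, hGradient]
  ring

/-- **Lemma 2.1 (Gaunt–Reinert).** Let `f : ℝ → ℝ` be twice continuously differentiable with
bounded first and second derivatives, and let `g(s) = f(∑_j s_j²)/4`. Then
`∑_{j,k} σ_{jk} E[∂²g/∂s_j∂s_k(S)] − E[∑_j S_j ∂g/∂s_j(S)]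
  = E[F_r f''(F_r) + (1/2)(r − 1 − F_r) f'(F_r)]`. -/
theorem chiSq_mvn_stein_equation_connection (n r : ℕ) (hn : 1 ≤ n) (hr : 2 ≤ r)
    (f f' f'' : ℝ → ℝ)
    (hf1 : ∀ x, HasDerivAt f (f' x) x)
    (hf2 : ∀ x, HasDerivAt f' (f'' x) x)
    (hf2c : Continuous f'')
    (C1 C2 : ℝ) (hb1 : ∀ x, |f' x| ≤ C1) (hb2 : ∀ x, |f'' x| ≤ C2) :
    (∑ j, ∑ k, covS n r j k *
        ∫ ω, pd j (fun s => pd k (fun s' : Fin r → ℝ => f (∑ l, (s' l) ^ 2) / 4) s)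
          (fun l => Sstat n r l ω) ∂(friedmanMeasure n r)) -
      (∫ ω, ∑ j, Sstat n r j ω *
          pd j (fun s' : Fin r → ℝ => f (∑ l, (s' l) ^ 2) / 4) (fun l => Sstat n r l ω)
          ∂(friedmanMeasure n r))
      = ∫ ω, (friedman n r ω * f'' (friedman n r ω)
          + 1 / 2 * ((r : ℝ) - 1 - friedman n r ω) * f' (friedman n r ω))
          ∂(friedmanMeasure n r) :=
  chiSq_mvn_stein_equation_connection_general n r hn hr f f' f'' hf1 hf2
end
end

section
/- For every j ∈ {1, …, r}, E[S_j⁴] = 3(r−1)((5n−2)r² − 5n − 2)/(5n r² (r+1)), and in particular E[S_j⁴] ≤ 3 − 6/(5n). -/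
set_option maxHeartbeats 1000000


open MeasureTheory Finset Real

section FriedmanAux
open Finset

lemma sumc1 (c : ℝ) (m : ℕ) : ∑ v ∈ range m, ((v:ℝ)+c) = (m:ℝ)*((m:ℝ)-1)/2 + c*m := by
  induction m with
  | zero => simp
  | succ k ih => rw [sum_range_succ, ih]; push_cast; ring

lemma sumc2 (c : ℝ) (m : ℕ) : ∑ v ∈ range m, ((v:ℝ)+c)^2
    = (m:ℝ)*((m:ℝ)-1)*(2*(m:ℝ)-1)/6 + c*(m:ℝ)*((m:ℝ)-1) + c^2*m := by
  induction m with
  | zero => simp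
  | succ k ih => rw [sum_range_succ, ih]; push_cast; ring

lemma sumc3 (c : ℝ) (m : ℕ) : ∑ v ∈ range m, ((v:ℝ)+c)^3
    = ((m:ℝ)*((m:ℝ)-1)/2)^2 + c*(m:ℝ)*((m:ℝ)-1)*(2*(m:ℝ)-1)/2
      + 3*c^2*(m:ℝ)*((m:ℝ)-1)/2 + c^3*m := by
  induction m with
  | zero => simp
  | succ k ih => rw [sum_range_succ, ih]; push_cast; ring

lemma sumc4 (c : ℝ) (m : ℕ) : ∑ v ∈ range m, ((v:ℝ)+c)^4
    = (m:ℝ)*((m:ℝ)-1)*(2*(m:ℝ)-1)*(3*(m:ℝ)^2-3*(m:ℝ)-1)/30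
      + 4*c*((m:ℝ)*((m:ℝ)-1)/2)^2 + c^2*(m:ℝ)*((m:ℝ)-1)*(2*(m:ℝ)-1)
      + 2*c^3*(m:ℝ)*((m:ℝ)-1) + c^4*m := by
  induction m with
  | zero => simp
  | succ k ih => rw [sum_range_succ, ih]; push_cast; ring

lemma perm_sum {m : ℕ} (j : Fin (m+1)) (f : Fin (m+1) → ℝ) :
    ∑ p : Equiv.Perm (Fin (m+1)), f (p j) = (m.factorial : ℝ) * ∑ v, f v := by
  have h1 : ∑ p : Equiv.Perm (Fin (m+1)), f (p j)
      = ∑ p : Equiv.Perm (Fin (m+1)), f (p 0) := by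
    rw [← Equiv.sum_comp (Equiv.mulRight (Equiv.swap (0 : Fin (m+1)) j))
      (fun p => f (p 0))]
    refine Fintype.sum_congr _ _ fun p => ?_
    simp [Equiv.coe_mulRight, Equiv.Perm.mul_apply, Equiv.swap_apply_left]
  rw [h1, ← Equiv.sum_comp Equiv.Perm.decomposeFin.symm (fun p => f (p 0))]
  simp [Fintype.sum_prod_type, Equiv.Perm.decomposeFin_symm_apply_zero,
    Finset.sum_const, Fintype.card_perm, Fintype.card_fin, Finset.mul_sum,
    mul_comm]

lemma moments {α : Type*} [Fintype α] (g : α → ℝ)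
    (h1 : ∑ a, g a = 0) (h3 : ∑ a, g a ^ 3 = 0) (n : ℕ) :
    (∑ ω : Fin n → α, (∑ i, g (ω i)) = 0) ∧
    (∑ ω : Fin n → α, (∑ i, g (ω i))^3 = 0) ∧
    ((∑ ω : Fin n → α, (∑ i, g (ω i))^2) * (Fintype.card α : ℝ)
      = n * (∑ a, g a ^ 2) * (Fintype.card α : ℝ)^n) ∧
    ((∑ ω : Fin n → α, (∑ i, g (ω i))^4) * (Fintype.card α : ℝ)^2
      = n * (∑ a, g a ^ 4) * (Fintype.card α : ℝ)^(n+1)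
        + 3*n*((n:ℝ)-1)*(∑ a, g a ^ 2)^2*(Fintype.card α : ℝ)^n) := by
  set N : ℝ := (Fintype.card α : ℝ) with hN
  induction n with
  | zero =>
    refine ⟨?_, ?_, ?_, ?_⟩ <;> simp
  | succ n ih =>
    obtain ⟨ih1, ih3, ih2, ih4⟩ := ih
    have key : ∀ k : ℕ, ∑ ω : Fin (n+1) → α, (∑ i, g (ω i))^k
        = ∑ a : α, ∑ ω : Fin n → α, (g a + ∑ i, g (ω i))^k := by
      intro k
      rw [← Equiv.sum_comp (Fin.consEquiv (fun _ : Fin (n+1) => α))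
        (fun ω => (∑ i, g (ω i))^k), Fintype.sum_prod_type]
      refine Fintype.sum_congr _ _ fun a => Fintype.sum_congr _ _ fun ω => ?_
      congr 1
      rw [Fin.sum_univ_succ]
      simp [Fin.consEquiv]
    have hcard : ((Fintype.card (Fin n → α) : ℕ) : ℝ) = N^n := by
      rw [Fintype.card_fun]; push_cast [Fintype.card_fin]; ring
    have inner1 : ∀ (c : ℝ), ∑ ω : Fin n → α, (c + ∑ i, g (ω i))
        = N^n * c := by
      intro c
      simp only [Finset.sum_add_distrib, ih1, Finset.sum_const, Finset.card_univ,
        nsmul_eq_mul, hcard, add_zero]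
    have inner2 : ∀ (c : ℝ), ∑ ω : Fin n → α, (c + ∑ i, g (ω i))^2
        = N^n * c^2 + (∑ ω : Fin n → α, (∑ i, g (ω i))^2) := by
      intro c
      have e : ∀ T : ℝ, (c + T)^2 = c^2 + (2*c)*T + T^2 := fun T => by ring
      simp only [e, Finset.sum_add_distrib, ← Finset.mul_sum, Finset.sum_const,
        Finset.card_univ, nsmul_eq_mul, hcard, ih1, mul_zero, add_zero]
    have inner3 : ∀ (c : ℝ), ∑ ω : Fin n → α, (c + ∑ i, g (ω i))^3
        = N^n * c^3 + (3*(∑ ω : Fin n → α, (∑ i, g (ω i))^2))*c := by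
      intro c
      have e : ∀ T : ℝ, (c + T)^3 = c^3 + (3*c^2)*T + (3*c)*T^2 + T^3 :=
        fun T => by ring
      simp only [e, Finset.sum_add_distrib, ← Finset.mul_sum, Finset.sum_const,
        Finset.card_univ, nsmul_eq_mul, hcard, ih1, ih3, mul_zero, add_zero]
      ring
    have inner4 : ∀ (c : ℝ), ∑ ω : Fin n → α, (c + ∑ i, g (ω i))^4
        = N^n * c^4 + (6*(∑ ω : Fin n → α, (∑ i, g (ω i))^2))*c^2
          + (∑ ω : Fin n → α, (∑ i, g (ω i))^4) := by
      intro c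
      have e : ∀ T : ℝ, (c + T)^4
          = c^4 + (4*c^3)*T + (6*c^2)*T^2 + (4*c)*T^3 + T^4 := fun T => by ring
      simp only [e, Finset.sum_add_distrib, ← Finset.mul_sum, Finset.sum_const,
        Finset.card_univ, nsmul_eq_mul, hcard, ih1, ih3, mul_zero, add_zero]
      ring
    refine ⟨?_, ?_, ?_, ?_⟩
    · have k1 := key 1
      simp only [pow_one] at k1
      rw [k1]
      simp only [inner1, ← Finset.mul_sum, h1, mul_zero]
    · rw [key 3]
      simp only [inner3, Finset.sum_add_distrib, ← Finset.mul_sum, h1, h3,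
        mul_zero, add_zero]
    · rw [key 2]
      simp only [inner2, Finset.sum_add_distrib, ← Finset.mul_sum,
        Finset.sum_const, Finset.card_univ, nsmul_eq_mul, ← hN]
      push_cast
      linear_combination N * ih2
    · rw [key 4]
      simp only [inner4, Finset.sum_add_distrib, ← Finset.mul_sum,
        Finset.sum_const, Finset.card_univ, nsmul_eq_mul, ← hN]
      push_cast
      linear_combination N * ih4 + (6*(∑ a, g a ^ 2)*N) * ih2

end FriedmanAux

instance (r : ℕ) : MeasurableSingletonClass (Equiv.Perm (Fin r)) :=
  ⟨fun _ => MeasurableSpace.measurableSet_top⟩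


/-- **Lemma 3.2, (3.1) (Gaunt–Reinert).** For `n ≥ 1`, `r ≥ 2` and every `j`,
`E[S_j⁴] = 3(r−1)((5n−2)r² − 5n − 2)/(5nr²(r+1))`, and in particular `E[S_j⁴] ≤ 3 − 6/(5n)`. -/
theorem Sstat_fourth_moment (n r : ℕ) (hn : 1 ≤ n) (hr : 2 ≤ r) (j : Fin r) :
    (∫ ω, (Sstat n r j ω) ^ 4 ∂(friedmanMeasure n r)
      = 3 * ((r : ℝ) - 1) * ((5 * (n : ℝ) - 2) * (r : ℝ) ^ 2 - 5 * (n : ℝ) - 2)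
          / (5 * (n : ℝ) * (r : ℝ) ^ 2 * ((r : ℝ) + 1))) ∧
    ∫ ω, (Sstat n r j ω) ^ 4 ∂(friedmanMeasure n r) ≤ 3 - 6 / (5 * (n : ℝ)) := by
  obtain ⟨m, rfl⟩ : ∃ m, r = m + 1 := ⟨r - 1, by omega⟩
  set R : ℝ := ((m + 1 : ℕ) : ℝ) with hRdef
  have hR2 : (2:ℝ) ≤ R := by simp only [hRdef]; exact_mod_cast hr
  have hRpos : (0:ℝ) < R := by linarith
  have hnn : (1:ℝ) ≤ (n:ℝ) := by exact_mod_cast hn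
  have hnpos : (0:ℝ) < (n:ℝ) := by linarith
  set g : Equiv.Perm (Fin (m+1)) → ℝ :=
    fun p => ((p j : ℕ) : ℝ) + 1 - (R + 1) / 2 with hgdef
  set F : ℝ := (m.factorial : ℝ) with hFdef
  have hFpos : (0:ℝ) < F := by
    simp only [hFdef]; exact_mod_cast m.factorial_pos
  have hNc : ((Fintype.card (Equiv.Perm (Fin (m+1))) : ℕ) : ℝ) = R * F := by
    simp only [hFdef, hRdef, Fintype.card_perm, Fintype.card_fin, Nat.factorial_succ]
    push_cast; ring
  have hNcpos : (0:ℝ) < R * F := by positivity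
  -- moments of g over a single permutation
  have hsum : ∀ k : ℕ, ∑ p : Equiv.Perm (Fin (m+1)), (g p) ^ k
      = F * ∑ v ∈ range (m+1), ((v:ℝ) + (1 - (R + 1) / 2)) ^ k := by
    intro k
    have := perm_sum j (fun v : Fin (m+1) => (((v : ℕ) : ℝ) + (1 - (R + 1) / 2)) ^ k)
    rw [Fin.sum_univ_eq_sum_range (fun v : ℕ => (((v : ℕ) : ℝ) + (1 - (R + 1) / 2)) ^ k)] at this
    rw [← this]
    refine Fintype.sum_congr _ _ fun p => ?_
    simp only [hgdef]; ring_nf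
  have hs1 : ∑ p : Equiv.Perm (Fin (m+1)), g p = 0 := by
    have h := hsum 1
    simp only [pow_one] at h
    rw [h, sumc1]
    simp only [hRdef]; push_cast; ring
  have hs3 : ∑ p : Equiv.Perm (Fin (m+1)), (g p) ^ 3 = 0 := by
    rw [hsum 3, sumc3]
    simp only [hRdef]; push_cast; ring
  have hs2 : ∑ p : Equiv.Perm (Fin (m+1)), (g p) ^ 2 = F * (R * (R^2 - 1) / 12) := by
    rw [hsum 2, sumc2]
    simp only [hRdef]; push_cast; ring
  have hs4 : ∑ p : Equiv.Perm (Fin (m+1)), (g p) ^ 4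
      = F * (R * (R^2 - 1) * (3*R^2 - 7) / 240) := by
    rw [hsum 4, sumc4]
    simp only [hRdef]; push_cast; ring
  have hM4 := (moments g hs1 hs3 n).2.2.2
  rw [hs2, hs4, hNc] at hM4
  -- the normalizing constant
  have hxpos : (0:ℝ) ≤ R * (R + 1) * (n:ℝ) := by positivity
  have hc4 : (Real.sqrt 12 / Real.sqrt (R * (R + 1) * (n:ℝ)))^4
      = 144 / (R * (R + 1) * (n:ℝ))^2 := by
    have h12 : Real.sqrt 12 ^ 2 = 12 := Real.sq_sqrt (by norm_num)
    have hx : Real.sqrt (R * (R + 1) * (n:ℝ)) ^ 2 = R * (R + 1) * (n:ℝ) :=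
      Real.sq_sqrt hxpos
    calc (Real.sqrt 12 / Real.sqrt (R * (R + 1) * (n:ℝ)))^4
        = (Real.sqrt 12 ^ 2)^2 / (Real.sqrt (R * (R + 1) * (n:ℝ)) ^ 2)^2 := by
          rw [div_pow]; ring
      _ = 144 / (R * (R + 1) * (n:ℝ))^2 := by rw [h12, hx]; norm_num
  -- rewrite the integral as a finite sum
  have hint : ∫ ω, (Sstat n (m+1) j ω) ^ 4 ∂(friedmanMeasure n (m+1))
      = ((R * F) ^ n)⁻¹ * ((Real.sqrt 12 / Real.sqrt (R * (R + 1) * (n:ℝ)))^4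
          * ∑ ω : Fin n → Equiv.Perm (Fin (m+1)), (∑ i, g (ω i))^4) := by
    rw [friedmanMeasure, PMF.integral_eq_sum]
    have hcard : ((Fintype.card (Fin n → Equiv.Perm (Fin (m+1))) : ℕ) : ℝ)
        = (R * F) ^ n := by
      rw [Fintype.card_fun]
      push_cast [Fintype.card_fin, hNc]
      ring
    have hstep : ∀ ω : Fin n → Equiv.Perm (Fin (m+1)),
        ((PMF.uniformOfFintype (Fin n → Equiv.Perm (Fin (m+1))) ω).toReal)
          • (Sstat n (m+1) j ω ^ 4)
        = ((R * F) ^ n)⁻¹ * ((Real.sqrt 12 / Real.sqrt (R * (R + 1) * (n:ℝ)))^4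
            * (∑ i, g (ω i))^4) := by
      intro ω
      have hS : Sstat n (m+1) j ω
          = Real.sqrt 12 / Real.sqrt (R * (R + 1) * (n:ℝ)) * ∑ i, g (ω i) := by
        simp only [Sstat, rho, hgdef, hRdef]
      rw [hS, mul_pow, smul_eq_mul]
      congr 1
      rw [PMF.uniformOfFintype_apply, ENNReal.toReal_inv, ← hcard]
      simp
    rw [Finset.sum_congr rfl (fun ω _ => hstep ω), ← Finset.mul_sum, ← Finset.mul_sum]
  -- part 1 : exact value
  have hEq : ∫ ω, (Sstat n (m+1) j ω) ^ 4 ∂(friedmanMeasure n (m+1))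
      = 3 * (R - 1) * ((5 * (n : ℝ) - 2) * R ^ 2 - 5 * (n : ℝ) - 2)
          / (5 * (n : ℝ) * R ^ 2 * (R + 1)) := by
    rw [hint, hc4, inv_mul_eq_div, div_eq_iff (pow_ne_zero n hNcpos.ne')]
    apply mul_right_cancel₀ (pow_ne_zero 2 hNcpos.ne')
    rw [mul_assoc (144 / (R * (R + 1) * (n:ℝ))^2), hM4, pow_succ]
    field_simp
    ring
  refine ⟨hEq, ?_⟩
  rw [hEq]
  have h5 : (3:ℝ) - 6 / (5 * (n:ℝ)) = (15 * (n:ℝ) - 6) / (5 * (n:ℝ)) := by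
    field_simp; ring
  rw [h5, div_le_div_iff₀ (by positivity) (by positivity)]
  nlinarith [mul_nonneg (mul_nonneg hnpos.le (by nlinarith : (0:ℝ) ≤ 15*(n:ℝ)-6)) (sq_nonneg R),
    mul_nonneg (mul_nonneg hnpos.le (by nlinarith : (0:ℝ) ≤ R - 1)) (by nlinarith : (0:ℝ) ≤ 5*(n:ℝ)+2)]
end

section
/- For n ≥ 1 and r ≥ 2, Friedman's statistic satisfies E[F_r] = r − 1, E[F_r²] = r² − 1 − 2(r−1)/n, and Var(F_r) = 2(r−1)(1 − 1/n). -/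
open MeasureTheory Finset Real

/-!
Let `X σ ∈ ℝ^r` be the vector of centred ranks of a permutation `σ`, so that
`F_r = 12 / (r (r + 1) n) · ‖X π_1 + ⋯ + X π_n‖²`. The `X π_i` are i.i.d. and centred, and
`‖X σ‖² = V := r (r² - 1) / 12` for every `σ`. Expanding the second and fourth powers of the norm
of a sum of i.i.d. centred vectors gives `E ‖∑ X π_i‖² = n V` and
`E ‖∑ X π_i‖⁴ = n V² + n (n - 1) (V² + 2 E ⟪X π, X π'⟫²)` for independent `π, π'`. Finally
`E ⟪X π, X π'⟫²` is the squared Frobenius norm of the covariance matrix of `X π`, which is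
`V / (r - 1) · (I - J / r)`: its rows sum to zero since the coordinates of `X π` do, and its
off-diagonal entries are all equal since any two of them are exchanged by relabelling with a swap.
Hence `E ⟪X π, X π'⟫² = V² / (r - 1)`.
-/

open Equiv
open scoped BigOperators RealInnerProductSpace

lemma Fintype.expect_fin_succ_pi {G M : Type*} [Fintype G] [AddCommMonoid M] [Module ℚ≥0 M]
    {m : ℕ} (f : (Fin (m + 1) → G) → M) :
    𝔼 ω, f ω = 𝔼 p, 𝔼 ω : Fin m → G, f (Fin.cons p ω) := by
  rw [← Finset.expect_product',
    ← Fintype.expect_equiv (Fin.consEquiv fun _ => G) _ _ fun _ => rfl]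
  rfl

lemma Fin.sum_comp_cons {G M : Type*} [AddCommMonoid M] (X : G → M) {m : ℕ} (p : G)
    (ω : Fin m → G) :
    ∑ i, X ((Fin.cons p ω : Fin (m + 1) → G) i) = X p + ∑ i, X (ω i) := by
  simp [Fin.sum_univ_succ]

section SumOfIndependentVectors

variable {G E : Type*} [Fintype G] [NormedAddCommGroup E] [InnerProductSpace ℝ E]

lemma expect_inner_eq_zero {X : G → E} (hX : ∑ p, X p = 0) (y : E) : 𝔼 p, ⟪y, X p⟫ = 0 := by
  rw [Fintype.expect_eq_sum_div_card, ← inner_sum, hX, inner_zero_right, zero_div]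

variable [Nonempty G]

lemma expect_inner_sum_comp_eq_zero {X : G → E} (hX : ∑ p, X p = 0) (a : E) (m : ℕ) :
    𝔼 ω : Fin m → G, ⟪a, ∑ i, X (ω i)⟫ = 0 := by
  induction m with
  | zero => simp
  | succ m ih =>
    simp only [Fintype.expect_fin_succ_pi, Fin.sum_comp_cons, inner_add_right,
      expect_add_distrib, ih, Fintype.expect_const, add_zero]
    exact expect_inner_eq_zero hX a

theorem expect_norm_sum_comp_sq {X : G → E} (hX : ∑ p, X p = 0) (m : ℕ) :
    𝔼 ω : Fin m → G, ‖∑ i, X (ω i)‖ ^ 2 = m * 𝔼 p, ‖X p‖ ^ 2 := by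
  induction m with
  | zero => simp
  | succ m ih =>
    simp only [Fintype.expect_fin_succ_pi, Fin.sum_comp_cons, norm_add_sq_real,
      expect_add_distrib, ← mul_expect, expect_inner_sum_comp_eq_zero hX, ih,
      Fintype.expect_const]
    push_cast
    ring

theorem expect_norm_sum_comp_pow_four {X : G → E} (hX : ∑ p, X p = 0) (m : ℕ) :
    𝔼 ω : Fin m → G, ‖∑ i, X (ω i)‖ ^ 4 = m * 𝔼 p, ‖X p‖ ^ 4
      + m * (m - 1) * ((𝔼 p, ‖X p‖ ^ 2) ^ 2 + 2 * 𝔼 p, 𝔼 q, ⟪X p, X q⟫ ^ 2) := by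
  induction m with
  | zero => simp
  | succ m ih =>
    have expand : ∀ x y : E, ‖x + y‖ ^ 4 = ‖x‖ ^ 4 + 4 * ⟪x, y⟫ ^ 2 + ‖y‖ ^ 4
        + 4 * (‖x‖ ^ 2 * ⟪x, y⟫) + 2 * (‖x‖ ^ 2 * ‖y‖ ^ 2) + 4 * (⟪y, x⟫ * ‖y‖ ^ 2) := by
      intro x y
      rw [show ‖x + y‖ ^ 4 = (‖x + y‖ ^ 2) ^ 2 by ring, norm_add_sq_real, real_inner_comm y]
      ring
    have inner_sq : ∀ p, 𝔼 ω : Fin m → G, ⟪X p, ∑ i, X (ω i)⟫ ^ 2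
        = m * 𝔼 q, ⟪X p, X q⟫ ^ 2 := by
      intro p
      have hu : ∑ q, ⟪X p, X q⟫ = 0 := by rw [← inner_sum, hX, inner_zero_right]
      simpa only [inner_sum, Real.norm_eq_abs, sq_abs] using expect_norm_sum_comp_sq hu m
    have cubic : 𝔼 p, 𝔼 ω : Fin m → G, ⟪∑ i, X (ω i), X p⟫ * ‖∑ i, X (ω i)‖ ^ 2 = 0 := by
      rw [expect_comm]
      simp only [← expect_mul, expect_inner_eq_zero hX, zero_mul, expect_const_zero]
    rw [Fintype.expect_fin_succ_pi]
    simp only [Fin.sum_comp_cons, expand, expect_add_distrib]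
    simp only [← mul_expect, inner_sq, expect_inner_sum_comp_eq_zero hX, ih,
      expect_norm_sum_comp_sq hX, cubic, ← expect_mul, mul_zero, expect_const_zero,
      Fintype.expect_const]
    push_cast
    ring

end SumOfIndependentVectors

lemma expect_expect_inner_sq_eq_sum_sq {G ι : Type*} [Fintype G] [Fintype ι]
    (X : G → EuclideanSpace ℝ ι) :
    𝔼 p, 𝔼 q, ⟪X p, X q⟫ ^ 2 = ∑ j, ∑ k, (𝔼 p, X p j * X p k) ^ 2 := by
  have h : ∀ p q, ⟪X p, X q⟫ ^ 2 = ∑ j, ∑ k, (X p j * X p k) * (X q j * X q k) := by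
    intro p q
    simp only [PiLp.inner_apply, RCLike.inner_apply, conj_trivial, sq, sum_mul_sum]
    exact sum_congr rfl fun j _ => sum_congr rfl fun k _ => by ring
  simp only [h, expect_sum_comm, sq, expect_mul_expect]

section UniformPermutation

variable {α : Type*} [Fintype α] [DecidableEq α]

lemma expect_perm_apply {M : Type*} [AddCommMonoid M] [Module ℚ≥0 M] (f : α → M) (j : α) :
    𝔼 σ : Perm α, f (σ j) = 𝔼 a, f a := by
  have : Nonempty α := ⟨j⟩
  have hconst : ∀ k, 𝔼 σ : Perm α, f (σ k) = 𝔼 σ : Perm α, f (σ j) := fun k =>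
    Fintype.expect_equiv (Equiv.mulRight (swap k j)) _ _ fun σ => by simp
  calc 𝔼 σ : Perm α, f (σ j)
      = 𝔼 k, 𝔼 σ : Perm α, f (σ k) := by simp only [hconst, Fintype.expect_const]
    _ = 𝔼 σ : Perm α, 𝔼 k, f (σ k) := expect_comm _ _ _
    _ = 𝔼 a, f a := by
      simp only [fun σ : Perm α => Fintype.expect_equiv σ (fun k => f (σ k)) f fun _ => rfl,
        Fintype.expect_const]

lemma expect_perm_apply_mul_apply_of_ne {g : α → ℝ} (hg : ∑ a, g a = 0) {j k : α}
    (hjk : j ≠ k) :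
    𝔼 σ : Perm α, g (σ j) * g (σ k) = -(𝔼 a, g a ^ 2) / (Fintype.card α - 1) := by
  have hcard : (Fintype.card α : ℝ) - 1 ≠ 0 := by
    rw [sub_ne_zero]
    exact_mod_cast (Fintype.one_lt_card_iff.2 ⟨j, k, hjk⟩).ne'
  have off_diag : ∀ l ∈ univ.erase j,
      𝔼 σ : Perm α, g (σ j) * g (σ l) = 𝔼 σ : Perm α, g (σ j) * g (σ k) := by
    intro l hl
    refine Fintype.expect_equiv (Equiv.mulRight (swap k l)) _ _ fun σ => ?_
    simp [swap_apply_of_ne_of_ne hjk (ne_of_mem_erase hl).symm]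
  have row : ∑ l, 𝔼 σ : Perm α, g (σ j) * g (σ l) = 0 := by
    rw [← expect_sum_comm]
    simp only [← mul_sum, Equiv.sum_comp _ g, hg, mul_zero, expect_const_zero]
  rw [← add_sum_erase _ _ (mem_univ j), sum_congr rfl off_diag, sum_const,
    card_erase_of_mem (mem_univ j), card_univ, expect_perm_apply (fun a => g a * g a)] at row
  rw [eq_div_iff hcard]
  simp only [nsmul_eq_mul, Nat.cast_pred (Fintype.card_pos_iff.2 ⟨j⟩), sq] at row ⊢
  linarith

end UniformPermutation

lemma sum_range_natCast (m : ℕ) : ∑ i ∈ range m, (i : ℝ) = m * (m - 1) / 2 := by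
  induction m with
  | zero => simp
  | succ m ih => rw [sum_range_succ, ih]; push_cast; ring

lemma sum_range_natCast_sq (m : ℕ) :
    ∑ i ∈ range m, (i : ℝ) ^ 2 = m * (m - 1) * (2 * m - 1) / 6 := by
  induction m with
  | zero => simp
  | succ m ih => rw [sum_range_succ, ih]; push_cast; ring

noncomputable def centeredRank (r : ℕ) (a : Fin r) : ℝ := (a : ℕ) + 1 - ((r : ℝ) + 1) / 2

lemma sum_centeredRank (r : ℕ) : ∑ a, centeredRank r a = 0 := by
  simp only [centeredRank, sum_sub_distrib, sum_add_distrib,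
    Fin.sum_univ_eq_sum_range (fun i => (i : ℝ)), sum_range_natCast, sum_const, card_univ,
    Fintype.card_fin, nsmul_eq_mul, mul_one]
  ring

lemma sum_centeredRank_sq (r : ℕ) : ∑ a, centeredRank r a ^ 2 = r * (r ^ 2 - 1) / 12 := by
  have h : ∀ a : Fin r,
      centeredRank r a ^ 2 = ((a : ℕ) : ℝ) ^ 2 + (1 - r) * (a : ℕ) + ((1 - r) / 2) ^ 2 := by
    intro a
    simp only [centeredRank]
    ring
  simp only [h, sum_add_distrib, ← mul_sum, Fin.sum_univ_eq_sum_range (fun i => (i : ℝ) ^ 2),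
    Fin.sum_univ_eq_sum_range (fun i => (i : ℝ)), sum_range_natCast, sum_range_natCast_sq,
    sum_const, card_univ, Fintype.card_fin, nsmul_eq_mul]
  ring

noncomputable def rankVector (r : ℕ) (σ : Perm (Fin r)) : EuclideanSpace ℝ (Fin r) :=
  WithLp.toLp 2 fun j => centeredRank r (σ j)

lemma norm_rankVector_sq {r : ℕ} (σ : Perm (Fin r)) :
    ‖rankVector r σ‖ ^ 2 = r * (r ^ 2 - 1) / 12 := by
  rw [EuclideanSpace.real_norm_sq_eq, ← sum_centeredRank_sq,
    ← Equiv.sum_comp σ (fun a => centeredRank r a ^ 2)]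
  rfl

lemma sum_rankVector (r : ℕ) : ∑ σ, rankVector r σ = 0 := by
  ext j
  have h := expect_perm_apply (centeredRank r) j
  rw [Fintype.expect_eq_sum_div_card, Fintype.expect_eq_sum_div_card, sum_centeredRank,
    zero_div, div_eq_zero_iff] at h
  simpa [rankVector] using h

lemma expect_expect_inner_rankVector_sq {r : ℕ} (hr : 2 ≤ r) :
    𝔼 σ, 𝔼 τ, ⟪rankVector r σ, rankVector r τ⟫ ^ 2 = (r * (r ^ 2 - 1) / 12) ^ 2 / (r - 1) := by
  have hr' : (r : ℝ) - 1 ≠ 0 := by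
    rw [sub_ne_zero]
    exact_mod_cast (by omega : r ≠ 1)
  have mean_sq : 𝔼 a, centeredRank r a ^ 2 = (r ^ 2 - 1) / 12 := by
    rw [Fintype.expect_eq_sum_div_card, sum_centeredRank_sq, Fintype.card_fin]
    field_simp
  have row : ∀ j, ∑ k, (𝔼 σ : Perm (Fin r), centeredRank r (σ j) * centeredRank r (σ k)) ^ 2
      = ((r ^ 2 - 1) / 12) ^ 2 * r / (r - 1) := by
    intro j
    rw [← add_sum_erase _ _ (mem_univ j),
      expect_perm_apply (fun a => centeredRank r a * centeredRank r a),
      sum_congr rfl fun k hk => by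
        rw [expect_perm_apply_mul_apply_of_ne (sum_centeredRank r) (ne_of_mem_erase hk).symm]]
    simp only [sum_const, card_erase_of_mem (mem_univ j), card_univ, Fintype.card_fin,
      nsmul_eq_mul, ← sq, mean_sq, Nat.cast_pred (by omega : 0 < r)]
    field_simp
    ring
  rw [expect_expect_inner_sq_eq_sum_sq]
  simp only [rankVector, row, sum_const, card_univ, Fintype.card_fin, nsmul_eq_mul]
  field_simp

lemma PMF.integral_uniformOfFintype_toMeasure {α : Type*} [Fintype α] [Nonempty α]
    [MeasurableSpace α] [MeasurableSingletonClass α] (f : α → ℝ) :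
    ∫ a, f a ∂(PMF.uniformOfFintype α).toMeasure = 𝔼 a, f a := by
  rw [integral_fintype Integrable.of_finite, Fintype.expect_eq_sum_div_card, sum_div]
  refine sum_congr rfl fun a _ => ?_
  rw [Measure.real, PMF.toMeasure_apply_singleton _ _ (measurableSet_singleton a),
    PMF.uniformOfFintype_apply]
  simp [div_eq_inv_mul]

lemma friedman_eq_norm_sq (n r : ℕ) (ω : Fin n → Perm (Fin r)) :
    friedman n r ω = 12 / (r * (r + 1) * n) * ‖∑ i, rankVector r (ω i)‖ ^ 2 := by
  rw [EuclideanSpace.real_norm_sq_eq, mul_sum]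
  refine sum_congr rfl fun j _ => ?_
  rw [Sstat, mul_pow, div_pow, sq_sqrt (by norm_num), sq_sqrt (by positivity)]
  simp [rankVector, rho, centeredRank]

/-- **Lemma 3.4 (Gaunt–Reinert).** For `n ≥ 1` and `r ≥ 2`, Friedman's statistic satisfies
`E[F_r] = r − 1`, `E[F_r²] = r² − 1 − 2(r−1)/n` and `Var(F_r) = 2(r−1)(1 − 1/n)`. -/
theorem friedman_mean_variance (n r : ℕ) (hn : 1 ≤ n) (hr : 2 ≤ r) :
    (∫ ω, friedman n r ω ∂(friedmanMeasure n r) = (r : ℝ) - 1) ∧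
    (∫ ω, (friedman n r ω) ^ 2 ∂(friedmanMeasure n r)
      = (r : ℝ) ^ 2 - 1 - 2 * ((r : ℝ) - 1) / (n : ℝ)) ∧
    ((∫ ω, (friedman n r ω) ^ 2 ∂(friedmanMeasure n r))
        - (∫ ω, friedman n r ω ∂(friedmanMeasure n r)) ^ 2
      = 2 * ((r : ℝ) - 1) * (1 - 1 / (n : ℝ))) := by
  have hn' : (n : ℝ) ≠ 0 := Nat.cast_ne_zero.2 (by omega)
  have hr' : (r : ℝ) - 1 ≠ 0 := by
    rw [sub_ne_zero]
    exact_mod_cast (by omega : r ≠ 1)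
  have centered := sum_rankVector r
  have mean : ∫ ω, friedman n r ω ∂(friedmanMeasure n r) = r - 1 := by
    simp only [friedmanMeasure, PMF.integral_uniformOfFintype_toMeasure, friedman_eq_norm_sq,
      ← mul_expect, expect_norm_sum_comp_sq centered, norm_rankVector_sq, Fintype.expect_const]
    field_simp
    ring
  have second : ∫ ω, friedman n r ω ^ 2 ∂(friedmanMeasure n r)
      = r ^ 2 - 1 - 2 * (r - 1) / n := by
    have quartic : ∀ σ, ‖rankVector r σ‖ ^ 4 = (‖rankVector r σ‖ ^ 2) ^ 2 := fun σ => by ring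
    simp only [friedmanMeasure, PMF.integral_uniformOfFintype_toMeasure, friedman_eq_norm_sq,
      mul_pow, ← pow_mul, ← mul_expect, expect_norm_sum_comp_pow_four centered, quartic,
      norm_rankVector_sq, expect_expect_inner_rankVector_sq hr, Fintype.expect_const]
    field_simp
    ring
  refine ⟨mean, second, ?_⟩
  rw [mean, second]
  field_simp
  ring
end
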